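/- Let f : ℝ^n → ℝ be convex and differentiable with L-Lipschitz gradient. Then ∇f is 1/L-cocoercive: ⟨u - v, ∇f(u) - ∇f(v)⟩ ≥ (1/L)‖∇f(u) - ∇f(v)‖² for all u, v (Baillon–Haddad). -/

import Mathlib

open scoped RealInnerProductSpace

/-!
Convexity gives the linear lower bound `f x + ⟪∇f x, y - x⟫ ≤ f y`, and the Lipschitz gradient
the quadratic upper bound `f y ≤ f x + ⟪∇f x, y - x⟫ + L/2 ‖y - x‖²`. Evaluating the lower bound
at `x` and the upper bound at `y` on the gradient step `z = y - (1/L) (∇f y - ∇f x)` sharpens the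
lower bound by `‖∇f y - ∇f x‖² / (2L)`; adding this to its copy with `x` and `y` swapped gives
cocoercivity.
-/

section

variable {E : Type*} [NormedAddCommGroup E] [InnerProductSpace ℝ E] [CompleteSpace E]
  {f : E → ℝ}

theorem HasGradientAt.hasDerivAt_comp_add_smul {g x d : E} {t : ℝ}
    (h : HasGradientAt f g (x + t • d)) :
    HasDerivAt (fun s : ℝ => f (x + s • d)) ⟪g, d⟫ t := by
  have hline : HasDerivAt (fun s : ℝ => x + s • d) d t := by
    simpa using ((hasDerivAt_id t).smul_const d).const_add x
  exact (hasGradientAt_iff_hasFDerivAt.mp h).comp_hasDerivAt t hline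

theorem ConvexOn.add_inner_sub_le_of_hasGradientAt (hconv : ConvexOn ℝ Set.univ f) {g x : E}
    (hg : HasGradientAt f g x) (y : E) :
    f x + ⟪g, y - x⟫ ≤ f y := by
  have hline : ConvexOn ℝ Set.univ (fun s : ℝ => f (x + s • (y - x))) := by
    simpa [Function.comp_def, AffineMap.lineMap_apply, add_comm, vsub_eq_sub] using
      hconv.comp_affineMap (AffineMap.lineMap x y)
  have hderiv := HasGradientAt.hasDerivAt_comp_add_smul (t := 0) (d := y - x) (by simpa using hg)
  have hslope := hline.le_slope_of_hasDerivAt (Set.mem_univ 0) (Set.mem_univ 1) one_pos hderiv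
  simp only [slope, sub_zero, inv_one, one_smul, zero_smul, add_zero, add_sub_cancel,
    vsub_eq_sub] at hslope
  linarith

theorem le_add_inner_gradient_add_sq_of_lipschitz_gradient (hf : Differentiable ℝ f) {L : ℝ}
    (hlip : ∀ u v, ‖gradient f u - gradient f v‖ ≤ L * ‖u - v‖) (x y : E) :
    f y ≤ f x + ⟪gradient f x, y - x⟫ + L / 2 * ‖y - x‖ ^ 2 := by
  set d := y - x
  -- the gap to the upper quadratic model along the segment is antitone
  let gap : ℝ → ℝ := fun t => f (x + t • d) - t * ⟪gradient f x, d⟫ - L / 2 * t ^ 2 * ‖d‖ ^ 2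
  have hgap : ∀ t, HasDerivAt gap
      (⟪gradient f (x + t • d) - gradient f x, d⟫ - L * t * ‖d‖ ^ 2) t := by
    intro t
    have hderiv := (((hf (x + t • d)).hasGradientAt.hasDerivAt_comp_add_smul).sub
      ((hasDerivAt_id t).mul_const ⟪gradient f x, d⟫)).sub
      (((hasDerivAt_pow 2 t).const_mul (L / 2)).mul_const (‖d‖ ^ 2))
    refine hderiv.congr_deriv ?_
    simp only [inner_sub_left]
    ring
  have hgap_nonpos : ∀ t ∈ interior (Set.Icc (0 : ℝ) 1),
      ⟪gradient f (x + t • d) - gradient f x, d⟫ - L * t * ‖d‖ ^ 2 ≤ 0 := by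
    intro t ht
    rw [interior_Icc] at ht
    rw [sub_nonpos]
    have hstep : ‖gradient f (x + t • d) - gradient f x‖ ≤ L * t * ‖d‖ := by
      simpa [norm_smul, abs_of_pos ht.1, mul_assoc] using hlip (x + t • d) x
    calc ⟪gradient f (x + t • d) - gradient f x, d⟫
        ≤ ‖gradient f (x + t • d) - gradient f x‖ * ‖d‖ := real_inner_le_norm _ _
      _ ≤ L * t * ‖d‖ * ‖d‖ := by gcongr
      _ = L * t * ‖d‖ ^ 2 := by ring
  have hanti : AntitoneOn gap (Set.Icc 0 1) :=
    antitoneOn_of_hasDerivWithinAt_nonpos (convex_Icc 0 1)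
      (HasDerivAt.continuousOn fun t _ => hgap t)
      (fun t _ => (hgap t).hasDerivWithinAt) hgap_nonpos
  have hends := hanti (by norm_num) (by norm_num) zero_le_one
  simp only [gap, d, one_smul, zero_smul, add_zero, add_sub_cancel] at hends
  linarith

theorem ConvexOn.add_inner_gradient_add_sq_le (hconv : ConvexOn ℝ Set.univ f)
    (hf : Differentiable ℝ f) {L : ℝ} (hL : 0 < L)
    (hlip : ∀ u v, ‖gradient f u - gradient f v‖ ≤ L * ‖u - v‖) (x y : E) :
    f x + ⟪gradient f x, y - x⟫ + 1 / (2 * L) * ‖gradient f y - gradient f x‖ ^ 2 ≤ f y := by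
  set d := gradient f y - gradient f x
  set z := y - (1 / L) • d
  have hlower := hconv.add_inner_sub_le_of_hasGradientAt (hf x).hasGradientAt z
  have hupper := le_add_inner_gradient_add_sq_of_lipschitz_gradient hf hlip y z
  have hzy : z - y = -((1 / L) • d) := by simp [z]
  have hzx : z - x = (y - x) + (z - y) := by abel
  rw [hzx, inner_add_right] at hlower
  have hinner : ⟪gradient f y, z - y⟫ - ⟪gradient f x, z - y⟫ = -(1 / L) * ‖d‖ ^ 2 := by
    rw [← inner_sub_left, hzy, inner_neg_right, real_inner_smul_right,
      real_inner_self_eq_norm_sq]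
    ring
  have hnorm : ‖z - y‖ ^ 2 = (1 / L) ^ 2 * ‖d‖ ^ 2 := by
    rw [hzy, norm_neg, norm_smul, Real.norm_of_nonneg (by positivity)]
    ring
  have hcoef : L / 2 * (1 / L) ^ 2 = 1 / L - 1 / (2 * L) := by
    field_simp
    ring
  rw [hnorm, ← mul_assoc, hcoef] at hupper
  linarith

end

theorem stmt3 {n : ℕ} (f : EuclideanSpace ℝ (Fin n) → ℝ) (L : ℝ) (hL : 0 < L)
    (hconv : ConvexOn ℝ Set.univ f) (hdiff : Differentiable ℝ f)
    (hlip : ∀ u v, ‖gradient f u - gradient f v‖ ≤ L * ‖u - v‖) :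
    ∀ u v, ⟪u - v, gradient f u - gradient f v⟫ ≥
      (1 / L) * ‖gradient f u - gradient f v‖ ^ 2 := by
  intro u v
  have huv := hconv.add_inner_gradient_add_sq_le hdiff hL hlip u v
  have hvu := hconv.add_inner_gradient_add_sq_le hdiff hL hlip v u
  have hsum : ⟪u - v, gradient f u - gradient f v⟫ =
      -⟪gradient f u, v - u⟫ - ⟪gradient f v, u - v⟫ := by
    simp only [inner_sub_left, inner_sub_right, real_inner_comm]
    ring
  rw [norm_sub_rev] at huv
  rw [ge_iff_le, hsum]
  have hhalf : 1 / L * ‖gradient f u - gradient f v‖ ^ 2 =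
      1 / (2 * L) * ‖gradient f u - gradient f v‖ ^ 2 +
        1 / (2 * L) * ‖gradient f u - gradient f v‖ ^ 2 := by
    field_simp
    ring
  linarith
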